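/- Lemma (rescaling identity between abstention and zero-one calibration gaps). Let p be a conditional probability vector on {1,...,n} and c ∈ (0,1). Define the probability vector p̄ on {1,...,n+1} by p̄(y) = p(y)/(2−c) for y ∈ {1,...,n} and p̄(n+1) = (1−c)/(2−c); then p̄(y) ≥ 0 and Σ_{y=1}^{n+1} p̄(y) = 1. For any nonempty S ⊆ ℝ^{n+1} and any v ∈ S, the abstention calibration gap equals (2−c) times the zero-one calibration gap under p̄: C_abs(v,p) − inf_{w∈S} C_abs(w,p) = (2 − c) · [ C_{01}(v,p̄) − inf_{w∈S} C_{01}(w,p̄) ], where C_{01}(v,q) = 1 − q(𝗁(v)) denotes the conditional zero-one risk over n+1 labels. -/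

import Mathlib

/- Setting: `n = m + 1 ≥ 2` classes (indices `0, …, m` of `Fin (m+2)` via `castSucc`), the
abstention label is `Fin.last (m+1)`, and `c ∈ (0,1)` is the abstention cost. -/

noncomputable def classMax (m : ℕ) (v : Fin (m + 2) → ℝ) : ℝ :=
  Finset.univ.sup' Finset.univ_nonempty (fun i : Fin (m + 1) => v i.castSucc)

/-- The prediction `𝗁(v)` of a score vector: the abstention label `Fin.last (m+1)` if its score
is at least the maximal class score, and otherwise the smallest class index achieving the
maximal class score (deterministic tie-breaking). -/
noncomputable def pred (m : ℕ) (v : Fin (m + 2) → ℝ) : Fin (m + 2) :=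
  if classMax m v ≤ v (Fin.last (m + 1)) then Fin.last (m + 1)
  else Fin.castSucc <|
    (Finset.univ.filter fun i : Fin (m + 1) => v i.castSucc = classMax m v).min'
      (by
        obtain ⟨b, -, hb⟩ :=
          Finset.exists_mem_eq_sup' (Finset.univ_nonempty (α := Fin (m + 1)))
            (fun i : Fin (m + 1) => v i.castSucc)
        exact ⟨b, Finset.mem_filter.mpr ⟨Finset.mem_univ b, hb.symm⟩⟩)

noncomputable def pext (m : ℕ) (c : ℝ) (p : Fin (m + 1) → ℝ) : Fin (m + 2) → ℝ :=
  Fin.snoc p (1 - c)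

noncomputable def condAbsRisk (m : ℕ) (c : ℝ) (p : Fin (m + 1) → ℝ)
    (v : Fin (m + 2) → ℝ) : ℝ :=
  1 - pext m c p (pred m v)

/-!
Proof. `p̄` is the extended vector `pext p` divided by its total mass `2 - c`, so the zero-one
risk under `p̄` is the affine function `(1 - c)/(2 - c) + (2 - c)⁻¹ · C_abs(·, p)` of the
abstention risk. An affine map with nonnegative slope commutes with `sInf` on a nonempty set
bounded below (here: finite, since the prediction takes finitely many values), and the constant
cancels in the gap.
-/

lemma sub_csInf_image_const_add_mul {α : Type*} {f : α → ℝ} {S : Set α}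
    (hf : BddBelow (f '' S)) {v : α} (hv : v ∈ S) (a : ℝ) {b : ℝ} (hb : 0 ≤ b) :
    (a + b * f v) - sInf ((fun w => a + b * f w) '' S) = b * (f v - sInf (f '' S)) := by
  have hmono : Monotone fun x : ℝ => a + b * x := fun x y hxy => by
    simpa using mul_le_mul_of_nonneg_left hxy hb
  have hsInf : sInf ((fun x => a + b * x) '' (f '' S)) = a + b * sInf (f '' S) :=
    (hmono.map_csInf_of_continuousAt (by fun_prop) ⟨_, Set.mem_image_of_mem f hv⟩ hf).symm
  rw [← Set.image_comp, Function.comp_def] at hsInf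
  rw [hsInf]
  ring

lemma condAbsRisk_image_subset (m : ℕ) (c : ℝ) (p : Fin (m + 1) → ℝ)
    (S : Set (Fin (m + 2) → ℝ)) :
    condAbsRisk m c p '' S ⊆ Set.range fun y => 1 - pext m c p y := by
  rintro _ ⟨w, -, rfl⟩
  exact ⟨pred m w, rfl⟩

lemma bddBelow_condAbsRisk_image (m : ℕ) (c : ℝ) (p : Fin (m + 1) → ℝ)
    (S : Set (Fin (m + 2) → ℝ)) : BddBelow (condAbsRisk m c p '' S) :=
  ((Set.finite_range _).subset (condAbsRisk_image_subset m c p S)).bddBelow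

noncomputable def rescaledProb (m : ℕ) (c : ℝ) (p : Fin (m + 1) → ℝ) : Fin (m + 2) → ℝ :=
  Fin.snoc (fun y : Fin (m + 1) => p y / (2 - c)) ((1 - c) / (2 - c))

lemma rescaledProb_eq_pext_div (m : ℕ) (c : ℝ) (p : Fin (m + 1) → ℝ) (y : Fin (m + 2)) :
    rescaledProb m c p y = pext m c p y / (2 - c) := by
  induction y using Fin.lastCases <;> simp [rescaledProb, pext]

lemma pext_nonneg {m : ℕ} {c : ℝ} (hc : c ≤ 1) {p : Fin (m + 1) → ℝ} (hp : ∀ y, 0 ≤ p y)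
    (y : Fin (m + 2)) : 0 ≤ pext m c p y := by
  induction y using Fin.lastCases with
  | last => simpa [pext] using hc
  | cast i => simpa [pext] using hp i

lemma sum_pext {m : ℕ} (c : ℝ) {p : Fin (m + 1) → ℝ} (hp : ∑ y, p y = 1) :
    ∑ y, pext m c p y = 2 - c := by
  rw [Fin.sum_univ_castSucc]
  simp only [pext, Fin.snoc_castSucc, Fin.snoc_last, hp]
  ring

lemma rescaledProb_nonneg {m : ℕ} {c : ℝ} (hc : c ≤ 1) {p : Fin (m + 1) → ℝ}
    (hp : ∀ y, 0 ≤ p y) (y : Fin (m + 2)) : 0 ≤ rescaledProb m c p y := by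
  rw [rescaledProb_eq_pext_div]
  exact div_nonneg (pext_nonneg hc hp y) (by linarith)

lemma sum_rescaledProb {m : ℕ} {c : ℝ} (hc : c ≠ 2) {p : Fin (m + 1) → ℝ}
    (hp : ∑ y, p y = 1) : ∑ y, rescaledProb m c p y = 1 := by
  simp only [rescaledProb_eq_pext_div, ← Finset.sum_div, sum_pext c hp]
  exact div_self (sub_ne_zero.mpr hc.symm)

lemma one_sub_rescaledProb_pred {m : ℕ} {c : ℝ} (hc : c ≠ 2) (p : Fin (m + 1) → ℝ)
    (w : Fin (m + 2) → ℝ) :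
    1 - rescaledProb m c p (pred m w) = (1 - c) / (2 - c) + (2 - c)⁻¹ * condAbsRisk m c p w := by
  have : (2 : ℝ) - c ≠ 0 := sub_ne_zero.mpr hc.symm
  rw [rescaledProb_eq_pext_div, condAbsRisk]
  field_simp
  ring

theorem stmt_8_general (m : ℕ) (c : ℝ) (hc : c ∈ Set.Ioo (0 : ℝ) 1)
    (p : Fin (m + 1) → ℝ) (hp0 : ∀ y, 0 ≤ p y) (hp1 : ∑ y, p y = 1)
    (S : Set (Fin (m + 2) → ℝ)) :
    (∀ y, 0 ≤ (Fin.snoc (fun y : Fin (m + 1) => p y / (2 - c)) ((1 - c) / (2 - c)) :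
        Fin (m + 2) → ℝ) y) ∧
    (∑ y, (Fin.snoc (fun y : Fin (m + 1) => p y / (2 - c)) ((1 - c) / (2 - c)) :
        Fin (m + 2) → ℝ) y = 1) ∧
    ∀ v ∈ S,
      condAbsRisk m c p v - sInf (condAbsRisk m c p '' S)
        = (2 - c) *
          ((1 - (Fin.snoc (fun y : Fin (m + 1) => p y / (2 - c)) ((1 - c) / (2 - c)) :
              Fin (m + 2) → ℝ) (pred m v))
            - sInf ((fun w =>
                1 - (Fin.snoc (fun y : Fin (m + 1) => p y / (2 - c)) ((1 - c) / (2 - c)) :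
                  Fin (m + 2) → ℝ) (pred m w)) '' S)) := by
  have hc1 : c ≤ 1 := hc.2.le
  have hc2 : c ≠ 2 := by linarith [hc.2]
  refine ⟨rescaledProb_nonneg hc1 hp0, sum_rescaledProb hc2 hp1, fun v hv => ?_⟩
  change _ = (2 - c) * ((1 - rescaledProb m c p (pred m v)) -
    sInf ((fun w => 1 - rescaledProb m c p (pred m w)) '' S))
  simp only [one_sub_rescaledProb_pred hc2]
  rw [sub_csInf_image_const_add_mul (bddBelow_condAbsRisk_image m c p S) hv _
    (inv_nonneg.mpr (by linarith)), ← mul_assoc, mul_inv_cancel₀ (sub_ne_zero.mpr hc2.symm),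
    one_mul]

/-- **Lemma (rescaling identity between abstention and zero-one calibration gaps).**
With `p̄(y) = p(y)/(2-c)` for class labels and `p̄(n+1) = (1-c)/(2-c)`, the vector `p̄` is a
probability vector on the `n + 1` labels, and for any nonempty `S` and any `v ∈ S` the
abstention calibration gap equals `(2 - c)` times the zero-one calibration gap under `p̄`. -/
theorem stmt_8 (m : ℕ) (hm : 1 ≤ m) (c : ℝ) (hc : c ∈ Set.Ioo (0 : ℝ) 1)
    (p : Fin (m + 1) → ℝ) (hp0 : ∀ y, 0 ≤ p y) (hp1 : ∑ y, p y = 1)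
    (S : Set (Fin (m + 2) → ℝ)) (hS : S.Nonempty) :
    (∀ y, 0 ≤ (Fin.snoc (fun y : Fin (m + 1) => p y / (2 - c)) ((1 - c) / (2 - c)) :
        Fin (m + 2) → ℝ) y) ∧
    (∑ y, (Fin.snoc (fun y : Fin (m + 1) => p y / (2 - c)) ((1 - c) / (2 - c)) :
        Fin (m + 2) → ℝ) y = 1) ∧
    ∀ v ∈ S,
      condAbsRisk m c p v - sInf (condAbsRisk m c p '' S)
        = (2 - c) *
          ((1 - (Fin.snoc (fun y : Fin (m + 1) => p y / (2 - c)) ((1 - c) / (2 - c)) :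
              Fin (m + 2) → ℝ) (pred m v))
            - sInf ((fun w =>
                1 - (Fin.snoc (fun y : Fin (m + 1) => p y / (2 - c)) ((1 - c) / (2 - c)) :
                  Fin (m + 2) → ℝ) (pred m w)) '' S)) :=
  stmt_8_general m c hc p hp0 hp1 S
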